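/- arXiv:0707.4546 — 2 statements merged into one kernel-verified Lean document; each statement's English description precedes it below -/
import Mathlib

section
/- Let 0 < α ≤ 1/2, d ≥ 1, let x : [0,1] → ℝ^d be continuous with ‖x‖_α < ∞, and let D = (0 = t_0 < ⋯ < t_N = 1) be a subdivision of [0,1]. There exists a constant C (depending only on α) such that whenever t_i ≤ s ≤ t ≤ t_{i+1} for some i, one has | ∫_s^t (x(u) − x^D(u)) ⊗ (x^D)'(u) du | ≤ C ‖x‖_α² (t − s)^{2α}, where (x^D)' denotes the (piecewise constant) derivative of the piecewise linear interpolation x^D and the integral is a Bochner integral with values in ℝ^d ⊗ ℝ^d equipped with the Euclidean (Hilbert–Schmidt) tensor norm. -/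
open MeasureTheory ProbabilityTheory Filter Set

noncomputable section

abbrev Vec (d : ℕ) := EuclideanSpace ℝ (Fin d)
abbrev Ten (d : ℕ) := EuclideanSpace ℝ (Fin d × Fin d)

/-- Elementary tensor `a ⊗ b` of two vectors in `ℝ^d`, realized in `ℝ^{d×d}`
with the Euclidean (Hilbert–Schmidt) norm. -/
def tens {d : ℕ} (a b : Vec d) : Ten d := WithLp.toLp 2 (fun p : Fin d × Fin d => a p.1 * b p.2)

/-- The transposition map `π` with `π (a ⊗ b) = b ⊗ a`. -/
def tswap {d : ℕ} (z : Ten d) : Ten d := WithLp.toLp 2 (fun p : Fin d × Fin d => z (p.2, p.1))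

/-- A subdivision `0 = t₀ < t₁ < ⋯ < t_N = 1` of `[0,1]`. -/
structure Subdivision : Type where
  N : ℕ
  pos : 0 < N
  t : ℕ → ℝ
  zero : t 0 = 0
  last : t N = 1
  mono : ∀ i, i < N → t i < t (i + 1)

/-- The mesh `|D|` of a subdivision. -/
def Subdivision.mesh (D : Subdivision) : ℝ :=
  (Finset.range D.N).sup' (Finset.nonempty_range_iff.mpr D.pos.ne')
    (fun i => D.t (i + 1) - D.t i)

/-- `xD` is the piecewise linear interpolation of `x` along `D`. -/
def IsPL {d : ℕ} (D : Subdivision) (x xD : ℝ → Vec d) : Prop :=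
  ∀ i, i < D.N → ∀ u ∈ Icc (D.t i) (D.t (i + 1)),
    xD u = x (D.t i) + ((u - D.t i) / (D.t (i + 1) - D.t i)) • (x (D.t (i + 1)) - x (D.t i))

/-- `xD'` is the (piecewise constant) derivative of the piecewise linear
interpolation of `x` along `D`. -/
def IsPLDeriv {d : ℕ} (D : Subdivision) (x xD' : ℝ → Vec d) : Prop :=
  ∀ i, i < D.N → ∀ u ∈ Ioo (D.t i) (D.t (i + 1)),
    xD' u = (D.t (i + 1) - D.t i)⁻¹ • (x (D.t (i + 1)) - x (D.t i))

/-- `B` is a standard `d`-dimensional Brownian motion on `[0,1]`: a.s. continuous paths,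
`B 0 = 0`, and the coordinates of all increments over `[0,1]` are jointly independent
centered Gaussians, the coordinates of the increment over `[s,t]` having variance `t - s`.
(Equivalently, the `d` coordinate processes are independent centered Gaussian processes
with covariance `min s t`.) -/
structure IsBrownian (d : ℕ) {Ω : Type*} [MeasurableSpace Ω] (P : Measure Ω)
    (B : ℝ → Ω → Vec d) : Prop where
  meas : ∀ t, Measurable (B t)
  cont : ∀ᵐ ω ∂P, ContinuousOn (fun t => B t ω) (Icc 0 1)
  init : ∀ᵐ ω ∂P, B 0 ω = 0
  incr : ∀ s t : ℝ, 0 ≤ s → s ≤ t → t ≤ 1 → ∀ i : Fin d,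
    Measure.map (fun ω => B t ω i - B s ω i) P = gaussianReal 0 (Real.toNNReal (t - s))
  indep : ∀ (n : ℕ) (τ : ℕ → ℝ), Monotone τ → (∀ k, τ k ∈ Icc (0 : ℝ) 1) →
    iIndepFun
      (fun p : Fin n × Fin d => fun ω => B (τ (p.1.val + 1)) ω p.2 - B (τ p.1.val) ω p.2) P

/-!
On `[t_i, t_{i+1}]`, of length `Δ`, the interpolation error `x - x^D` is at most `2MΔ^α` and the
slope `(x^D)'` at most `MΔ^(α-1)`, so the integrand is bounded by `2M²Δ^(2α-1)` (off the endpoints,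
where `(x^D)'` is unspecified). Integrating over `[s, t]` gives `2M²Δ^(2α-1)(t - s)`, which is at most
`2M²(t - s)^(2α)` because `2α - 1 ≤ 0` and `t - s ≤ Δ`.
-/

lemma norm_tens {d : ℕ} (a b : Vec d) : ‖tens a b‖ = ‖a‖ * ‖b‖ := by
  rw [EuclideanSpace.norm_eq, EuclideanSpace.norm_eq, EuclideanSpace.norm_eq,
    ← Real.sqrt_mul (by positivity), Finset.sum_mul_sum, ← Fintype.sum_prod_type']
  simp [tens, mul_pow, Real.norm_eq_abs, sq_abs]

lemma Subdivision.monotoneOn_t (D : Subdivision) : MonotoneOn D.t (Iic D.N) :=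
  monotoneOn_of_le_succ ordConnected_Iic fun i _ _ hi =>
    (D.mono i ((Order.lt_succ_of_not_isMax (not_isMax i)).trans_le hi)).le

lemma Subdivision.zero_le_t (D : Subdivision) {i : ℕ} (hi : i ≤ D.N) : 0 ≤ D.t i :=
  D.zero ▸ D.monotoneOn_t (Nat.zero_le D.N) hi (Nat.zero_le i)

lemma Subdivision.t_le_one (D : Subdivision) {i : ℕ} (hi : i ≤ D.N) : D.t i ≤ 1 :=
  D.last ▸ D.monotoneOn_t hi (mem_Iic.2 le_rfl) hi

section HolderOnInterval

variable {E : Type*} [NormedAddCommGroup E] {x : ℝ → E} {a b M α : ℝ}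

lemma norm_sub_le_of_holderOn (hα : 0 ≤ α) (hM : 0 ≤ M)
    (hx : ∀ s t, a ≤ s → s < t → t ≤ b → ‖x t - x s‖ ≤ M * (t - s) ^ α)
    {s t : ℝ} (has : a ≤ s) (hst : s ≤ t) (htb : t ≤ b) : ‖x t - x s‖ ≤ M * (b - a) ^ α := by
  rcases hst.eq_or_lt with rfl | hst
  · simpa using mul_nonneg hM (Real.rpow_nonneg (by linarith) α)
  · exact (hx s t has hst htb).trans <| by gcongr

lemma norm_sub_lineInterp_le [NormedSpace ℝ E] (hα : 0 ≤ α) (hM : 0 ≤ M) (hab : a < b)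
    (hx : ∀ s t, a ≤ s → s < t → t ≤ b → ‖x t - x s‖ ≤ M * (t - s) ^ α) {u : ℝ}
    (hu : u ∈ Icc a b) :
    ‖x u - (x a + ((u - a) / (b - a)) • (x b - x a))‖ ≤ 2 * M * (b - a) ^ α := by
  have hc : ‖(u - a) / (b - a)‖ ≤ 1 := by
    rw [Real.norm_of_nonneg (div_nonneg (by linarith [hu.1]) (by linarith)),
      div_le_one (by linarith)]
    linarith [hu.2]
  have hxu := norm_sub_le_of_holderOn hα hM hx le_rfl hu.1 hu.2
  have hxb := norm_sub_le_of_holderOn hα hM hx le_rfl hab.le le_rfl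
  calc ‖x u - (x a + ((u - a) / (b - a)) • (x b - x a))‖
      = ‖(x u - x a) - ((u - a) / (b - a)) • (x b - x a)‖ := by rw [sub_add_eq_sub_sub]
    _ ≤ ‖x u - x a‖ + ‖(u - a) / (b - a)‖ * ‖x b - x a‖ := norm_sub_le_of_le le_rfl
        (norm_smul_le _ _)
    _ ≤ M * (b - a) ^ α + 1 * (M * (b - a) ^ α) := by gcongr
    _ = 2 * M * (b - a) ^ α := by ring

lemma norm_slope_le [NormedSpace ℝ E] (hα : 0 ≤ α) (hM : 0 ≤ M) (hab : a < b)
    (hx : ∀ s t, a ≤ s → s < t → t ≤ b → ‖x t - x s‖ ≤ M * (t - s) ^ α) :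
    ‖(b - a)⁻¹ • (x b - x a)‖ ≤ M * (b - a) ^ (α - 1) := by
  have hba : 0 < b - a := sub_pos.mpr hab
  rw [norm_smul, Real.norm_of_nonneg (inv_nonneg.mpr hba.le), Real.rpow_sub_one hba.ne',
    mul_div_assoc', div_eq_inv_mul]
  gcongr
  exact norm_sub_le_of_holderOn hα hM hx le_rfl hab.le le_rfl

end HolderOnInterval

lemma norm_tens_interp_error_slope_le {d : ℕ} {x : ℝ → Vec d} {a b M α : ℝ} (hα : 0 ≤ α)
    (hM : 0 ≤ M) (hab : a < b)
    (hx : ∀ s t, a ≤ s → s < t → t ≤ b → ‖x t - x s‖ ≤ M * (t - s) ^ α) {u : ℝ}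
    (hu : u ∈ Icc a b) :
    ‖tens (x u - (x a + ((u - a) / (b - a)) • (x b - x a))) ((b - a)⁻¹ • (x b - x a))‖ ≤
      2 * M ^ 2 * (b - a) ^ (2 * α - 1) := by
  have hba : 0 < b - a := sub_pos.mpr hab
  rw [norm_tens]
  calc _ ≤ 2 * M * (b - a) ^ α * (M * (b - a) ^ (α - 1)) :=
        mul_le_mul (norm_sub_lineInterp_le hα hM hab hx hu) (norm_slope_le hα hM hab hx)
          (norm_nonneg _) (by positivity)
    _ = 2 * M ^ 2 * (b - a) ^ (2 * α - 1) := by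
        rw [show 2 * α - 1 = α + (α - 1) by ring, Real.rpow_add hba]; ring

lemma rpow_sub_one_mul_le_rpow {h Δ p : ℝ} (hh : 0 ≤ h) (hΔ : h ≤ Δ) (hp : p ≤ 1) :
    Δ ^ (p - 1) * h ≤ h ^ p := by
  rcases hh.eq_or_lt with rfl | hh
  · simpa using Real.rpow_nonneg le_rfl p
  · calc Δ ^ (p - 1) * h ≤ h ^ (p - 1) * h :=
          mul_le_mul_of_nonneg_right (Real.rpow_le_rpow_of_nonpos hh hΔ (by linarith)) hh.le
      _ = h ^ p := by rw [Real.rpow_sub_one hh.ne', div_mul_cancel₀ _ hh.ne']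

lemma norm_intervalIntegral_le_of_norm_le_on_Ioo {E : Type*} [NormedAddCommGroup E]
    [NormedSpace ℝ E] {f : ℝ → E} {a b s t K : ℝ} (has : a ≤ s) (hst : s ≤ t) (htb : t ≤ b)
    (hf : ∀ u ∈ Ioo a b, ‖f u‖ ≤ K) : ‖∫ u in s..t, f u‖ ≤ K * (t - s) := by
  have hb : ∀ᵐ u ∂volume, u ≠ b := compl_mem_ae_iff.mpr (measure_singleton b)
  have hae : ∀ᵐ u ∂volume, u ∈ uIoc s t → ‖f u‖ ≤ K := by
    filter_upwards [hb] with u hub hu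
    rw [uIoc_of_le hst] at hu
    exact hf u ⟨has.trans_lt hu.1, (hu.2.trans htb).lt_of_ne hub⟩
  simpa [abs_of_nonneg (sub_nonneg.mpr hst)] using
    intervalIntegral.norm_integral_le_of_norm_le_const_ae hae

/-- **Local second-level estimate on one subdivision interval.**
Let `0 < α ≤ 1/2`, `d ≥ 1`, let `x : [0,1] → ℝ^d` be continuous with `α`-Hölder seminorm at
most `M`, and let `D` be a subdivision of `[0,1]`. There is a constant `C` (depending only
on `α`) such that whenever `t_i ≤ s ≤ t ≤ t_{i+1}`,
`| ∫_s^t (x(u) − x^D(u)) ⊗ (x^D)'(u) du | ≤ C M² (t − s)^{2α}`,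
the integral being a Bochner integral in `ℝ^d ⊗ ℝ^d` with the Hilbert–Schmidt norm. -/
theorem local_second_level_estimate (α : ℝ) (hα0 : 0 < α) (hα : α ≤ 1 / 2) :
    ∃ C : ℝ, ∀ d : ℕ, 1 ≤ d → ∀ (x xD xD' : ℝ → Vec d) (D : Subdivision) (M : ℝ),
      ContinuousOn x (Icc 0 1) → 0 ≤ M →
      (∀ s t : ℝ, 0 ≤ s → s < t → t ≤ 1 → ‖x t - x s‖ ≤ M * (t - s) ^ α) →
      IsPL D x xD → IsPLDeriv D x xD' →
      ∀ i, i < D.N → ∀ s t : ℝ, D.t i ≤ s → s ≤ t → t ≤ D.t (i + 1) →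
        ‖∫ u in s..t, tens (x u - xD u) (xD' u)‖ ≤ C * M ^ 2 * (t - s) ^ (2 * α) := by
  refine ⟨2, fun d _ x xD xD' D M _ hM hx hPL hPL' i hi s t hs hst ht => ?_⟩
  have hxi : ∀ s t, D.t i ≤ s → s < t → t ≤ D.t (i + 1) → ‖x t - x s‖ ≤ M * (t - s) ^ α :=
    fun s t hs hst ht => hx s t ((D.zero_le_t hi.le).trans hs) hst (ht.trans (D.t_le_one hi))
  calc ‖∫ u in s..t, tens (x u - xD u) (xD' u)‖
      ≤ 2 * M ^ 2 * (D.t (i + 1) - D.t i) ^ (2 * α - 1) * (t - s) :=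
        norm_intervalIntegral_le_of_norm_le_on_Ioo hs hst ht fun u hu => by
          rw [hPL i hi u (Ioo_subset_Icc_self hu), hPL' i hi u hu]
          exact norm_tens_interp_error_slope_le hα0.le hM (D.mono i hi) hxi
            (Ioo_subset_Icc_self hu)
    _ ≤ 2 * M ^ 2 * (t - s) ^ (2 * α) := by
        rw [mul_assoc]
        gcongr
        exact rpow_sub_one_mul_le_rpow (sub_nonneg.mpr hst) (by linarith) (by linarith)

end
end

section
/- Let 0 < β < α ≤ 1/2 with 2β ≤ 1 + α, let d ≥ 1, let x : [0,1] → ℝ^d be continuous with ‖x‖_α < ∞, and let A : {(s,t) : 0 ≤ s ≤ t ≤ 1} → ℝ^d ⊗ ℝ^d satisfy |A(s,t)| ≤ K (t − s)^{2α} for all s ≤ t and some K ≥ 0. Let D = (0 = t_0 < ⋯ < t_N = 1) be a subdivision with mesh |D|, and define X(s,t) := ∫_s^t x_{s,u} ⊗ (x^D)'(u) du − A(s,t). Then there is a constant C (depending only on α, β) such that whenever t_i ≤ s < t ≤ t_{i+1} for some i, |X(s,t)| ≤ C (K + ‖x‖_α²) |D|^{2(α − β)} (t − s)^{2β}. -/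
open MeasureTheory ProbabilityTheory Filter Set

noncomputable section

namespace Subdivision

variable (D : Subdivision)

lemma monotoneOn_t_s5 : MonotoneOn D.t (Iic D.N) :=
  monotoneOn_of_le_succ ordConnected_Iic fun i _ _ hi => (D.mono i hi).le

lemma t_nonneg {i : ℕ} (hi : i ≤ D.N) : 0 ≤ D.t i :=
  D.zero ▸ D.monotoneOn_t_s5 (Nat.zero_le _) hi (Nat.zero_le _)

lemma t_le_one_s5 {i : ℕ} (hi : i ≤ D.N) : D.t i ≤ 1 :=
  D.last ▸ D.monotoneOn_t_s5 hi (mem_Iic.mpr le_rfl) hi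

lemma sub_le_mesh {i : ℕ} (hi : i < D.N) : D.t (i + 1) - D.t i ≤ D.mesh :=
  Finset.le_sup' (fun j => D.t (j + 1) - D.t j) (Finset.mem_range.mpr hi)

end Subdivision

lemma intervalIntegral.norm_integral_le_of_norm_le_const_on_Ioo {E : Type*}
    [NormedAddCommGroup E] [NormedSpace ℝ E] {f : ℝ → E} {a b C : ℝ} (hab : a ≤ b)
    (h : ∀ u ∈ Ioo a b, ‖f u‖ ≤ C) : ‖∫ u in a..b, f u‖ ≤ C * (b - a) := by
  have hne : ∀ᵐ u : ℝ, u ≠ b := compl_mem_ae_iff.mpr (measure_singleton b)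
  rw [← abs_of_nonneg (sub_nonneg.mpr hab)]
  refine norm_integral_le_of_norm_le_const_ae (hne.mono fun u hub hu => h u ?_)
  rw [uIoc_of_le hab] at hu
  exact ⟨hu.1, hu.2.lt_of_ne hub⟩

lemma norm_slope_le_of_norm_sub_le {E : Type*} [SeminormedAddCommGroup E] [NormedSpace ℝ E]
    {x : ℝ → E} {a b M α : ℝ} (hab : a < b) (hx : ‖x b - x a‖ ≤ M * (b - a) ^ α) :
    ‖slope x a b‖ ≤ M * (b - a) ^ (α - 1) := by
  have hba : 0 < b - a := sub_pos.mpr hab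
  rw [slope_def_module, norm_smul, norm_inv, Real.norm_of_nonneg hba.le,
    Real.rpow_sub_one hba.ne', inv_mul_eq_div, ← mul_div_assoc]
  gcongr

lemma rpow_le_rpow_sub_mul_rpow {r Δ p q : ℝ} (hr : 0 < r) (hrΔ : r ≤ Δ) (hqp : q ≤ p) :
    r ^ p ≤ Δ ^ (p - q) * r ^ q := by
  calc r ^ p = r ^ (p - q) * r ^ q := by rw [← Real.rpow_add hr, sub_add_cancel]
    _ ≤ Δ ^ (p - q) * r ^ q := by gcongr

section LocalDefect

variable {d : ℕ} {x xD' : ℝ → Vec d} {D : Subdivision} {M α : ℝ} {i : ℕ} {s t : ℝ}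

lemma norm_integral_tens_sub_le (hα : 0 ≤ α) (hM : 0 ≤ M)
    (hx : ∀ s t : ℝ, 0 ≤ s → s < t → t ≤ 1 → ‖x t - x s‖ ≤ M * (t - s) ^ α)
    (hD : IsPLDeriv D x xD') (hi : i < D.N) (hs : D.t i ≤ s) (hst : s ≤ t)
    (ht : t ≤ D.t (i + 1)) :
    ‖∫ u in s..t, tens (x u - x s) (xD' u)‖
      ≤ M ^ 2 * (D.t (i + 1) - D.t i) ^ (α - 1) * (t - s) ^ (1 + α) := by
  have hs0 : 0 ≤ s := (D.t_nonneg hi.le).trans hs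
  have ht1 : t ≤ 1 := ht.trans (D.t_le_one_s5 hi)
  have hslope : ‖slope x (D.t i) (D.t (i + 1))‖ ≤ M * (D.t (i + 1) - D.t i) ^ (α - 1) :=
    norm_slope_le_of_norm_sub_le (D.mono i hi)
      (hx _ _ (D.t_nonneg hi.le) (D.mono i hi) (D.t_le_one_s5 hi))
  have hbound : ∀ u ∈ Ioo s t, ‖tens (x u - x s) (xD' u)‖
      ≤ M * (t - s) ^ α * (M * (D.t (i + 1) - D.t i) ^ (α - 1)) := by
    intro u hu
    have hxD' : xD' u = slope x (D.t i) (D.t (i + 1)) := by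
      rw [hD i hi u ⟨hs.trans_lt hu.1, hu.2.trans_le ht⟩, slope_def_module]
    have hinc : ‖x u - x s‖ ≤ M * (t - s) ^ α := by
      calc ‖x u - x s‖ ≤ M * (u - s) ^ α := hx s u hs0 hu.1 (hu.2.le.trans ht1)
        _ ≤ M * (t - s) ^ α := by gcongr <;> linarith [hu.1, hu.2]
    rw [norm_tens, hxD']
    exact mul_le_mul hinc hslope (norm_nonneg _) (by positivity)
  calc _ ≤ M * (t - s) ^ α * (M * (D.t (i + 1) - D.t i) ^ (α - 1)) * (t - s) :=
        intervalIntegral.norm_integral_le_of_norm_le_const_on_Ioo hst hbound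
    _ = _ := by rw [Real.rpow_one_add' (sub_nonneg.mpr hst) (by linarith)]; ring

lemma norm_integral_tens_sub_sub_le {β K : ℝ} {A : ℝ → ℝ → Ten d} (hβα : β < α)
    (hβα' : 2 * β ≤ 1 + α) (hα : 0 ≤ α) (hM : 0 ≤ M) (hK : 0 ≤ K)
    (hx : ∀ s t : ℝ, 0 ≤ s → s < t → t ≤ 1 → ‖x t - x s‖ ≤ M * (t - s) ^ α)
    (hA : ∀ s t : ℝ, 0 ≤ s → s ≤ t → t ≤ 1 → ‖A s t‖ ≤ K * (t - s) ^ (2 * α))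
    (hD : IsPLDeriv D x xD') (hi : i < D.N) (hs : D.t i ≤ s) (hst : s < t)
    (ht : t ≤ D.t (i + 1)) :
    ‖(∫ u in s..t, tens (x u - x s) (xD' u)) - A s t‖
      ≤ (K + M ^ 2) * (D.t (i + 1) - D.t i) ^ (2 * (α - β)) * (t - s) ^ (2 * β) := by
  set Δ := D.t (i + 1) - D.t i
  have hΔ : 0 < Δ := sub_pos.mpr (D.mono i hi)
  have hr : 0 < t - s := sub_pos.mpr hst
  have hrΔ : t - s ≤ Δ := by linarith
  have hI : ‖∫ u in s..t, tens (x u - x s) (xD' u)‖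
      ≤ M ^ 2 * (Δ ^ (2 * (α - β)) * (t - s) ^ (2 * β)) :=
    calc _ ≤ M ^ 2 * Δ ^ (α - 1) * (t - s) ^ (1 + α) :=
          norm_integral_tens_sub_le hα hM hx hD hi hs hst.le ht
      _ ≤ M ^ 2 * Δ ^ (α - 1) * (Δ ^ (1 + α - 2 * β) * (t - s) ^ (2 * β)) := by
          gcongr; exact rpow_le_rpow_sub_mul_rpow hr hrΔ hβα'
      _ = M ^ 2 * (Δ ^ (2 * (α - β)) * (t - s) ^ (2 * β)) := by
          rw [← mul_assoc, mul_assoc (M ^ 2), ← Real.rpow_add hΔ]; ring_nf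
  have hA' : ‖A s t‖ ≤ K * (Δ ^ (2 * (α - β)) * (t - s) ^ (2 * β)) :=
    calc _ ≤ K * (t - s) ^ (2 * α) :=
          hA s t ((D.t_nonneg hi.le).trans hs) hst.le (ht.trans (D.t_le_one_s5 hi))
      _ ≤ K * (Δ ^ (2 * α - 2 * β) * (t - s) ^ (2 * β)) := by
          gcongr; exact rpow_le_rpow_sub_mul_rpow hr hrΔ (by linarith)
      _ = K * (Δ ^ (2 * (α - β)) * (t - s) ^ (2 * β)) := by ring_nf
  calc _ ≤ ‖∫ u in s..t, tens (x u - x s) (xD' u)‖ + ‖A s t‖ := norm_sub_le _ _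
    _ ≤ _ := by linarith

end LocalDefect

theorem local_defect_estimate_general (α β : ℝ) (hβ0 : 0 < β) (hβα : β < α)
    (hβα' : 2 * β ≤ 1 + α) :
    ∃ C : ℝ, ∀ d : ℕ, 1 ≤ d → ∀ (x xD' : ℝ → Vec d) (A : ℝ → ℝ → Ten d)
      (D : Subdivision) (M K : ℝ),
      ContinuousOn x (Icc 0 1) → 0 ≤ M → 0 ≤ K →
      (∀ s t : ℝ, 0 ≤ s → s < t → t ≤ 1 → ‖x t - x s‖ ≤ M * (t - s) ^ α) →
      (∀ s t : ℝ, 0 ≤ s → s ≤ t → t ≤ 1 → ‖A s t‖ ≤ K * (t - s) ^ (2 * α)) →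
      IsPLDeriv D x xD' →
      ∀ i, i < D.N → ∀ s t : ℝ, D.t i ≤ s → s < t → t ≤ D.t (i + 1) →
        ‖(∫ u in s..t, tens (x u - x s) (xD' u)) - A s t‖
          ≤ C * (K + M ^ 2) * D.mesh ^ (2 * (α - β)) * (t - s) ^ (2 * β) := by
  refine ⟨1, fun d _ x xD' A D M K _ hM hK hx hA hD i hi s t hs hst ht => ?_⟩
  calc _ ≤ (K + M ^ 2) * (D.t (i + 1) - D.t i) ^ (2 * (α - β)) * (t - s) ^ (2 * β) :=
        norm_integral_tens_sub_sub_le hβα hβα' (hβ0.trans hβα).le hM hK hx hA hD hi hs hst ht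
    _ ≤ 1 * (K + M ^ 2) * D.mesh ^ (2 * (α - β)) * (t - s) ^ (2 * β) := by
        rw [one_mul]
        gcongr
        · exact (sub_pos.mpr (D.mono i hi)).le
        · exact D.sub_le_mesh hi

/-- **Local estimate (3.7)/(3.8) with an abstract second level.**
Let `0 < β < α ≤ 1/2` with `2β ≤ 1 + α`, let `x` have `α`-Hölder seminorm at most `M` on
`[0,1]`, and let `A` satisfy `|A(s,t)| ≤ K (t−s)^{2α}`. Set
`X(s,t) = ∫_s^t x_{s,u} ⊗ (x^D)'(u) du − A(s,t)`. Then there is `C = C(α,β)` such that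
whenever `t_i ≤ s < t ≤ t_{i+1}` for a subdivision interval of `D`,
`|X(s,t)| ≤ C (K + M²) |D|^{2(α−β)} (t−s)^{2β}`. -/
theorem local_defect_estimate (α β : ℝ) (hβ0 : 0 < β) (hβα : β < α) (hα : α ≤ 1 / 2)
    (hβα' : 2 * β ≤ 1 + α) :
    ∃ C : ℝ, ∀ d : ℕ, 1 ≤ d → ∀ (x xD' : ℝ → Vec d) (A : ℝ → ℝ → Ten d)
      (D : Subdivision) (M K : ℝ),
      ContinuousOn x (Icc 0 1) → 0 ≤ M → 0 ≤ K →
      (∀ s t : ℝ, 0 ≤ s → s < t → t ≤ 1 → ‖x t - x s‖ ≤ M * (t - s) ^ α) →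
      (∀ s t : ℝ, 0 ≤ s → s ≤ t → t ≤ 1 → ‖A s t‖ ≤ K * (t - s) ^ (2 * α)) →
      IsPLDeriv D x xD' →
      ∀ i, i < D.N → ∀ s t : ℝ, D.t i ≤ s → s < t → t ≤ D.t (i + 1) →
        ‖(∫ u in s..t, tens (x u - x s) (xD' u)) - A s t‖
          ≤ C * (K + M ^ 2) * D.mesh ^ (2 * (α - β)) * (t - s) ^ (2 * β) :=
  local_defect_estimate_general α β hβ0 hβα hβα'
end
end
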